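/- arXiv:2603.25824 — 2 statements merged into one kernel-verified Lean document; each statement's English description precedes it below -/
import Mathlib

section
/- Let γ ≥ 3 and κ ≥ 3 be integers and let p be a probability-distribution matrix with coupling polynomial f. Sample, independently for each position (r,c) ∈ {1,…,γ}×{1,…,κ}, a pair (K(r,c), R(r,c)) ∈ {0,…,m}×{0,…,M−1} taking the value (a,c') with probability p_{a,c'}. Call an ordered tuple (i_1,j_1,i_2,j_2,i_3,j_3), where i_1,i_2,i_3 are pairwise distinct rows and j_1,j_2,j_3 are pairwise distinct columns, active if Σ_{k=1}^{3}(K(i_k,j_k) − K(i_k,j_{k+1})) = 0 and M divides Σ_{k=1}^{3}(R(i_k,j_k) − R(i_k,j_{k+1})) (indices cyclic, j_4 = j_1). Then the expected number of active ordered tuples equals 36·C(γ,3)·C(κ,3)·Σ_{M∣b}[f^3(X,Y) f^3(X^{−1},Y^{−1})]_{0,b}. Since each cycle-6 candidate corresponds to exactly 6 ordered tuples, the expected number N_6(p) of cycle-6 candidates of the γ×κ all-one base matrix that remain active in the MD protograph equals 6·C(γ,3)·C(κ,3)·Σ_{M∣b}[f^3(X,Y) f^3(X^{−1},Y^{−1})]_{0,b}.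 -/
open scoped Classical

/-- The coupling polynomial with exponents scaled by `s`:
`f(X^s, Y^s) = ∑_{i=0}^{m} ∑_{j=0}^{M-1} p_{i,j} X^{s·i} Y^{s·j}`,
as an element of the group algebra of `ℤ × ℤ` over `ℝ`. -/
noncomputable def couplingPoly (m M : ℕ) (p : Fin (m + 1) → Fin M → ℝ) (s : ℤ) :
    AddMonoidAlgebra ℝ (ℤ × ℤ) :=
  ∑ i : Fin (m + 1), ∑ j : Fin M,
    AddMonoidAlgebra.single (s * (i : ℤ), s * (j : ℤ)) (p i j)

/-!
By linearity of expectation the expected count is a sum over ordered tuples of the probability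
that the tuple is active. This vanishes unless the rows and the columns are distinct, and then
the six cells `(i_k, j_k)`, `(i_k, j_{k+1})` are distinct, so their labels are independent with
law `p` and the probability is the same for every tuple. Expanding `f³(X,Y) f³(X⁻¹,Y⁻¹)` into
monomials indexed by those six labels shows that its coefficients at `(0, b)`, `M ∣ b`, add up to
exactly that probability, and there are `(3! C(γ,3)) (3! C(κ,3))` such tuples.
-/

open Finset Function AddMonoidAlgebra

theorem sum_prod_mul_comp_inl {R S σ τ : Type*} [CommSemiring R] [Fintype S] [Fintype σ]
    [Fintype τ] [DecidableEq σ] [DecidableEq τ] (w : S → R) (hw : ∑ s, w s = 1)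
    (g : (σ → S) → R) :
    ∑ v : σ ⊕ τ → S, (∏ x, w (v x)) * g (v ∘ Sum.inl) = ∑ a : σ → S, (∏ j, w (a j)) * g a := by
  have hτ : ∑ b : τ → S, ∏ z, w (b z) = 1 := by
    rw [← Fintype.prod_sum (fun _ : τ => w)]; simp [hw]
  rw [← (Equiv.sumArrowEquivProdArrow σ τ S).symm.sum_comp, Fintype.sum_prod_type]
  refine sum_congr rfl fun a _ => ?_
  have hinl : ∀ b : τ → S, (Equiv.sumArrowEquivProdArrow σ τ S).symm (a, b) ∘ Sum.inl = a :=
    fun _ => rfl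
  simp only [Fintype.prod_sum_type, Equiv.sumArrowEquivProdArrow_symm_apply_inl,
    Equiv.sumArrowEquivProdArrow_symm_apply_inr, hinl]
  rw [← mul_one ((∏ j, w (a j)) * g a), ← hτ, mul_sum]
  exact sum_congr rfl fun b _ => by ring

theorem sum_prod_mul_comp_of_injective {R S ι σ : Type*} [CommSemiring R] [Fintype S]
    [Fintype ι] [Fintype σ] [DecidableEq ι] [DecidableEq σ] (w : S → R) (hw : ∑ s, w s = 1)
    {φ : σ → ι} (hφ : Injective φ) (g : (σ → S) → R) :
    ∑ ω : ι → S, (∏ i, w (ω i)) * g (ω ∘ φ) = ∑ a : σ → S, (∏ j, w (a j)) * g a := by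
  let e : σ ⊕ ↥(Set.range φ)ᶜ ≃ ι :=
    (Equiv.sumCongr (Equiv.ofInjective φ hφ) (Equiv.refl _)).trans (Equiv.Set.sumCompl _)
  rw [← sum_prod_mul_comp_inl (τ := ↥(Set.range φ)ᶜ) w hw g,
    ← (e.arrowCongr (Equiv.refl S)).sum_comp]
  refine sum_congr rfl fun v _ => ?_
  have hv : (v ∘ e.symm) ∘ φ = v ∘ Sum.inl :=
    funext fun j => congrArg v (e.symm_apply_apply (Sum.inl j))
  change (∏ i, w (v (e.symm i))) * g ((v ∘ e.symm) ∘ φ) = _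
  rw [hv, e.symm.prod_comp (fun x => w (v x))]

theorem card_filter_injective_fin (k : ℕ) (α : Type*) [Fintype α] [DecidableEq α] :
    #{f : Fin k → α | Injective f} = k.factorial * (Fintype.card α).choose k := by
  rw [← Fintype.card_subtype, Fintype.card_congr (Equiv.subtypeInjectiveEquivEmbedding _ _),
    Fintype.card_embedding_eq, Fintype.card_fin, Nat.descFactorial_eq_factorial_mul_choose]

theorem sum_single_pow {ι R G : Type*} [Fintype ι] [CommSemiring R] [AddCommMonoid G]
    (e : ι → G) (w : ι → R) (n : ℕ) :
    (∑ u, single (e u) (w u) : AddMonoidAlgebra R G) ^ n =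
      ∑ a : Fin n → ι, single (∑ k, e (a k)) (∏ k, w (a k)) := by
  rw [Fintype.sum_pow]
  exact sum_congr rfl fun a _ => prod_single ..

theorem finsum_mem_coeff_sum_single {ι R A B : Type*} [Fintype ι] [Semiring R]
    (E : ι → A × B) (W : ι → R) (a : A) (s : Set B) :
    ∑ᶠ b ∈ s, (∑ q, single (E q) (W q) : AddMonoidAlgebra R (A × B)).coeff (a, b) =
      ∑ q, if (E q).1 = a ∧ (E q).2 ∈ s then W q else 0 := by
  simp only [coeff_sum, coeff_single, Finsupp.finsetSum_apply, Finsupp.single_apply,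
    finsum_mem_def, Set.indicator_apply, ite_sum_zero]
  rw [finsum_sum_comm]
  · refine sum_congr rfl fun q _ => ?_
    rw [finsum_eq_single _ (E q).2]
    · by_cases h : (E q).1 = a <;> simp [Prod.ext_iff, h]
    · intro b hb
      simp [Prod.ext_iff, Ne.symm hb]
  · intro q _
    refine (Set.finite_singleton (E q).2).subset fun b hb => ?_
    by_contra hb'
    exact hb (by simp [Prod.ext_iff, Ne.symm hb'])

def labelExponent {m M : ℕ} (u : Fin (m + 1) × Fin M) : ℤ × ℤ := ((u.1 : ℤ), (u.2 : ℤ))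

theorem couplingPoly_eq_sum_single (m M : ℕ) (p : Fin (m + 1) → Fin M → ℝ) (s : ℤ) :
    couplingPoly m M p s = ∑ u, single (s • labelExponent u) (uncurry p u) := by
  rw [couplingPoly, Fintype.sum_prod_type]
  rfl

/-- `a k` is the label at `(i_k, j_k)` and `b k` the one at `(i_k, j_{k+1})`. -/
def CycleActive {m M n : ℕ} (a b : Fin n → Fin (m + 1) × Fin M) : Prop :=
  ∑ k, (((a k).1 : ℤ) - (b k).1) = 0 ∧ (M : ℤ) ∣ ∑ k, (((a k).2 : ℤ) - (b k).2)

/-- Unfolds to the instance of the underlying conjunction, so that the indicator written out in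
`expected_active_cycle6_tuples` is definitionally the one of `CycleActive`. -/
instance {m M n : ℕ} (a b : Fin n → Fin (m + 1) × Fin M) : Decidable (CycleActive a b) :=
  inferInstanceAs (Decidable (_ ∧ _))

noncomputable def cycleActiveProb (m M n : ℕ) (p : Fin (m + 1) → Fin M → ℝ) : ℝ :=
  ∑ ab : (Fin n → Fin (m + 1) × Fin M) × (Fin n → Fin (m + 1) × Fin M),
    if CycleActive ab.1 ab.2 then (∏ k, uncurry p (ab.1 k)) * ∏ k, uncurry p (ab.2 k) else 0

theorem finsum_coeff_couplingPoly_pow_mul (m M n : ℕ) (p : Fin (m + 1) → Fin M → ℝ) :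
    ∑ᶠ b ∈ {b : ℤ | (M : ℤ) ∣ b},
        (couplingPoly m M p 1 ^ n * couplingPoly m M p (-1) ^ n).coeff (0, b) =
      cycleActiveProb m M n p := by
  simp only [couplingPoly_eq_sum_single, one_smul, neg_smul, sum_single_pow, sum_mul_sum,
    single_mul_single, ← Fintype.sum_prod_type', finsum_mem_coeff_sum_single]
  refine sum_congr rfl fun ab _ => ?_
  congr 1
  simp [CycleActive, labelExponent, Prod.fst_sum, Prod.snd_sum, sum_sub_distrib, ← sub_eq_add_neg]

def cycleCells {n γ κ : ℕ} [NeZero n] (i : Fin n → Fin γ) (j : Fin n → Fin κ) :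
    Fin n ⊕ Fin n → Fin γ × Fin κ :=
  Sum.elim (fun k => (i k, j k)) (fun k => (i k, j (k + 1)))

theorem cycleCells_injective {n γ κ : ℕ} [NeZero n] (hn : n ≠ 1) {i : Fin n → Fin γ}
    {j : Fin n → Fin κ} (hi : Injective i) (hj : Injective j) : Injective (cycleCells i j) := by
  have hsucc : ∀ k : Fin n, k ≠ k + 1 := fun k => by simpa [Fin.one_eq_zero_iff] using hn
  rintro (k | k) (l | l) h <;>
    simp only [cycleCells, Sum.elim_inl, Sum.elim_inr, Prod.mk.injEq] at h
  · rw [hi h.1]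
  · exact absurd (hj h.2) (by rw [hi h.1]; exact hsucc l)
  · exact absurd (hj h.2) (by rw [hi h.1]; exact (hsucc l).symm)
  · rw [hi h.1]

theorem sum_prod_mul_cycleActive {m M n γ κ : ℕ} [NeZero n] (hn : n ≠ 1)
    (p : Fin (m + 1) → Fin M → ℝ) (hp : ∑ u, uncurry p u = 1) {i : Fin n → Fin γ}
    {j : Fin n → Fin κ} (hi : Injective i) (hj : Injective j) :
    ∑ ω : Fin γ × Fin κ → Fin (m + 1) × Fin M, (∏ c, uncurry p (ω c)) *
        (if CycleActive (fun k => ω (i k, j k)) (fun k => ω (i k, j (k + 1))) then 1 else 0) =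
      cycleActiveProb m M n p := by
  refine (sum_prod_mul_comp_of_injective (uncurry p) hp (cycleCells_injective hn hi hj)
    fun v => if CycleActive (v ∘ Sum.inl) (v ∘ Sum.inr) then 1 else 0).trans ?_
  rw [← (Equiv.sumArrowEquivProdArrow _ _ _).symm.sum_comp, cycleActiveProb]
  refine sum_congr rfl fun ab _ => ?_
  rw [Fintype.prod_sum_type, mul_ite, mul_one, mul_zero]
  rfl

theorem card_filter_injective_prod_fin (k γ κ : ℕ) :
    #{t : (Fin k → Fin γ) × (Fin k → Fin κ) | Injective t.1 ∧ Injective t.2} =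
      k.factorial * γ.choose k * (k.factorial * κ.choose k) := by
  rw [← univ_product_univ, filter_product, card_product, card_filter_injective_fin,
    card_filter_injective_fin, Fintype.card_fin, Fintype.card_fin]

theorem expected_active_cycle6_tuples_general (m M : ℕ)
    (γ κ : ℕ)
    (p : Fin (m + 1) → Fin M → ℝ)
    (hsum : ∑ i : Fin (m + 1), ∑ j : Fin M, p i j = 1) :
    (∑ ω : Fin γ × Fin κ → Fin (m + 1) × Fin M,
      (∏ pos : Fin γ × Fin κ, p (ω pos).1 (ω pos).2) *
        ((Finset.univ.filter
          (fun t : (Fin 3 → Fin γ) × (Fin 3 → Fin κ) =>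
            Function.Injective t.1 ∧ Function.Injective t.2 ∧
            (∑ k : Fin 3,
              (((ω (t.1 k, t.2 k)).1 : ℤ) - ((ω (t.1 k, t.2 (k + 1))).1 : ℤ))) = 0 ∧
            (M : ℤ) ∣ ∑ k : Fin 3,
              (((ω (t.1 k, t.2 k)).2 : ℤ) - ((ω (t.1 k, t.2 (k + 1))).2 : ℤ)))).card : ℝ)) =
    36 * (γ.choose 3) * (κ.choose 3) *
      ∑ᶠ b ∈ {b : ℤ | (M : ℤ) ∣ b},
        (couplingPoly m M p 1 ^ 3 * couplingPoly m M p (-1) ^ 3).coeff (0, b) := by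
  have hp : ∑ u, uncurry p u = 1 := by rw [Fintype.sum_prod_type]; exact hsum
  have htuple : ∀ t : (Fin 3 → Fin γ) × (Fin 3 → Fin κ),
      ∑ ω : Fin γ × Fin κ → Fin (m + 1) × Fin M, (∏ c, uncurry p (ω c)) *
        (if Injective t.1 ∧ Injective t.2 ∧
          CycleActive (fun k => ω (t.1 k, t.2 k)) (fun k => ω (t.1 k, t.2 (k + 1))) then 1 else 0) =
      if Injective t.1 ∧ Injective t.2 then cycleActiveProb m M 3 p else 0 := by
    rintro ⟨i, j⟩
    by_cases hij : Injective i ∧ Injective j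
    · simp only [hij, true_and, if_true]
      exact sum_prod_mul_cycleActive (by norm_num) p hp hij.1 hij.2
    · simp [← and_assoc, hij]
  rw [finsum_coeff_couplingPoly_pow_mul]
  simp only [card_filter, Nat.cast_sum, Nat.cast_ite, Nat.cast_one, Nat.cast_zero, mul_sum]
  rw [sum_comm]
  refine (sum_congr rfl fun t _ => htuple t).trans ?_
  rw [← sum_filter, sum_const, card_filter_injective_prod_fin, nsmul_eq_mul]
  push_cast
  ring

/-- Sample, independently for each position of the `γ × κ`
all-one base matrix, a partition/relocation pair with law `p`. An ordered tuple
`(i₁,j₁,i₂,j₂,i₃,j₃)` with distinct rows `i` and distinct columns `j` is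
active if `Σₖ (K(iₖ,jₖ) − K(iₖ,j_{k+1})) = 0` and
`M ∣ Σₖ (R(iₖ,jₖ) − R(iₖ,j_{k+1}))` (cyclically, `j₄ = j₁`).
The expected number of active ordered tuples equals
`36·C(γ,3)·C(κ,3)·Σ_{M∣b}[f³(X,Y) f³(X⁻¹,Y⁻¹)]_{0,b}`
(each cycle-6 candidate corresponds to exactly 6 ordered tuples, so the
expected number of active cycle-6 candidates is
`6·C(γ,3)·C(κ,3)·Σ_{M∣b}[f³ f̄³]_{0,b}`). -/
theorem expected_active_cycle6_tuples (m M : ℕ) (hM : 1 ≤ M)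
    (γ κ : ℕ) (hγ : 3 ≤ γ) (hκ : 3 ≤ κ)
    (p : Fin (m + 1) → Fin M → ℝ)
    (hp : ∀ i j, 0 ≤ p i j)
    (hsum : ∑ i : Fin (m + 1), ∑ j : Fin M, p i j = 1) :
    (∑ ω : Fin γ × Fin κ → Fin (m + 1) × Fin M,
      (∏ pos : Fin γ × Fin κ, p (ω pos).1 (ω pos).2) *
        ((Finset.univ.filter
          (fun t : (Fin 3 → Fin γ) × (Fin 3 → Fin κ) =>
            Function.Injective t.1 ∧ Function.Injective t.2 ∧
            (∑ k : Fin 3,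
              (((ω (t.1 k, t.2 k)).1 : ℤ) - ((ω (t.1 k, t.2 (k + 1))).1 : ℤ))) = 0 ∧
            (M : ℤ) ∣ ∑ k : Fin 3,
              (((ω (t.1 k, t.2 k)).2 : ℤ) - ((ω (t.1 k, t.2 (k + 1))).2 : ℤ)))).card : ℝ)) =
    36 * (γ.choose 3) * (κ.choose 3) *
      ∑ᶠ b ∈ {b : ℤ | (M : ℤ) ∣ b},
        (couplingPoly m M p 1 ^ 3 * couplingPoly m M p (-1) ^ 3).coeff (0, b) :=
  expected_active_cycle6_tuples_general m M γ κ p hsum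
end

section
/- Let p be a probability-distribution matrix with coupling polynomial f. Consider seven independent entry-pairs (x_0,u_0), (x_1,u_1), …, (x_6,u_6), each valued in {0,…,m}×{0,…,M−1}. Then the sum, over all such tuples satisfying 2x_0 + x_1 + x_2 − x_3 − x_4 − x_5 − x_6 = 0 and M ∣ (2u_0 + u_1 + u_2 − u_3 − u_4 − u_5 − u_6), of the product ∏_{e=0}^{6} p_{x_e,u_e}, equals Σ_{M∣b}[f(X^2,Y^2) · f(X,Y)^2 · f(X^{−1},Y^{−1})^4]_{0,b}. In probabilistic terms this is the activeness probability of a cycle-8 candidate that traverses exactly one entry twice, both times with positive sign (the w_3 pattern of the paper's cycle-8 expectation formula). -/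
/-!
Expanding the product `∏ₑ f(X^{sₑ}, Y^{sₑ})` with `s = (2, 1, 1, -1, -1, -1, -1)` over all
tuples `t = ((x₀,u₀), …, (x₆,u₆))` turns it into `∑ₜ (∏ₑ p_{xₑ,uₑ}) X^{∑ sₑxₑ} Y^{∑ sₑuₑ}`.
Reading off the coefficients of `X⁰ Y^b` and summing over `M ∣ b` keeps exactly the tuples
with `∑ sₑxₑ = 0` and `M ∣ ∑ sₑuₑ`, each with weight `∏ₑ p_{xₑ,uₑ}`.
-/

open scoped Classical

open AddMonoidAlgebra

theorem finsum_mem_coeff_sum_single_s5 {ι k G H : Type*} [Semiring k] (T : Finset ι)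
    (a : ι → G × H) (w : ι → k) (c : G) (S : Set H) :
    ∑ᶠ b ∈ S, (∑ t ∈ T, single (a t) (w t)).coeff (c, b) =
      ∑ t ∈ T with (a t).1 = c ∧ (a t).2 ∈ S, w t := by
  set g : ι → H → k := fun t => S.indicator fun b => (single (a t) (w t)).coeff (c, b)
  have hsupport : ∀ t, (g t).support ⊆ {(a t).2} := by
    intro t b hb
    contrapose! hb
    simp [g, coeff_single, Finsupp.single_apply, Prod.ext_iff, Ne.symm hb]
  have hterm : ∀ t, ∑ᶠ b, g t b = if (a t).1 = c ∧ (a t).2 ∈ S then w t else 0 := by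
    intro t
    rw [finsum_eq_sum_of_support_subset _ (s := {(a t).2}) (by simpa using hsupport t)]
    by_cases hS : (a t).2 ∈ S <;>
      simp [g, hS, coeff_single, Finsupp.single_apply, Prod.ext_iff, eq_comm]
  have hsum : ∀ b, S.indicator (fun b => (∑ t ∈ T, single (a t) (w t)).coeff (c, b)) b =
      ∑ t ∈ T, g t b := by
    intro b
    by_cases hb : b ∈ S <;> simp [g, hb]
  rw [finsum_mem_def, finsum_congr hsum,
    finsum_sum_comm T (fun b t => g t b) fun t _ => (Set.finite_singleton _).subset (hsupport t),
    Finset.sum_filter]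
  simp_rw [hterm]

theorem couplingPoly_eq_sum (m M : ℕ) (p : Fin (m + 1) → Fin M → ℝ) (s : ℤ) :
    couplingPoly m M p s =
      ∑ x : Fin (m + 1) × Fin M, single (s * (x.1 : ℤ), s * (x.2 : ℤ)) (p x.1 x.2) := by
  rw [couplingPoly, Fintype.sum_prod_type]

theorem prod_couplingPoly {ι : Type*} [Fintype ι] [DecidableEq ι] (m M : ℕ)
    (p : Fin (m + 1) → Fin M → ℝ) (s : ι → ℤ) :
    ∏ e, couplingPoly m M p (s e) =
      ∑ t : ι → Fin (m + 1) × Fin M,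
        single (∑ e, (s e * ((t e).1 : ℤ), s e * ((t e).2 : ℤ))) (∏ e, p (t e).1 (t e).2) := by
  simp_rw [couplingPoly_eq_sum, Finset.prod_univ_sum, Fintype.piFinset_univ, prod_single]

theorem cycle8_pattern_w3_activeness_probability_general (m M : ℕ)
    (p : Fin (m + 1) → Fin M → ℝ) :
    (∑ t ∈ Finset.univ.filter
        (fun t : Fin 7 → Fin (m + 1) × Fin M =>
          2 * ((t 0).1 : ℤ) + ((t 1).1 : ℤ) + ((t 2).1 : ℤ) - ((t 3).1 : ℤ)
            - ((t 4).1 : ℤ) - ((t 5).1 : ℤ) - ((t 6).1 : ℤ) = 0 ∧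
          (M : ℤ) ∣ (2 * ((t 0).2 : ℤ) + ((t 1).2 : ℤ) + ((t 2).2 : ℤ)
            - ((t 3).2 : ℤ) - ((t 4).2 : ℤ) - ((t 5).2 : ℤ) - ((t 6).2 : ℤ))),
        ∏ e : Fin 7, p (t e).1 (t e).2) =
    ∑ᶠ b ∈ {b : ℤ | (M : ℤ) ∣ b},
      (couplingPoly m M p 2 * couplingPoly m M p 1 ^ 2 *
        couplingPoly m M p (-1) ^ 4).coeff (0, b) := by
  have hpoly : couplingPoly m M p 2 * couplingPoly m M p 1 ^ 2 * couplingPoly m M p (-1) ^ 4 =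
      ∏ e : Fin 7, couplingPoly m M p (![2, 1, 1, -1, -1, -1, -1] e) := by
    simp only [Fin.prod_univ_seven, Matrix.cons_val]
    ring
  have hweighted : ∀ v : Fin 7 → ℤ, ∑ e, ![2, 1, 1, -1, -1, -1, -1] e * v e =
      2 * v 0 + v 1 + v 2 - v 3 - v 4 - v 5 - v 6 := fun v => by
    simp only [Fin.sum_univ_seven, Matrix.cons_val]
    ring
  rw [hpoly, prod_couplingPoly, finsum_mem_coeff_sum_single_s5]
  refine Finset.sum_congr ?_ fun _ _ => rfl
  ext t
  simp only [Finset.mem_filter, Prod.fst_sum, Prod.snd_sum, hweighted, Set.mem_ofPred_eq]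

/-- For seven independent entry-pairs
`(x₀,u₀), …, (x₆,u₆)` each with law `p`, the sum over all tuples with
`2x₀ + x₁ + x₂ − x₃ − x₄ − x₅ − x₆ = 0` and
`M ∣ (2u₀ + u₁ + u₂ − u₃ − u₄ − u₅ − u₆)`, of `∏ₑ p_{xₑ,uₑ}`, equals
`Σ_{M∣b}[f(X²,Y²) · f(X,Y)² · f(X⁻¹,Y⁻¹)⁴]_{0,b}` (the `w₃` cycle-8
pattern: exactly one entry traversed twice, both times with positive sign). -/
theorem cycle8_pattern_w3_activeness_probability (m M : ℕ) (hM : 1 ≤ M)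
    (p : Fin (m + 1) → Fin M → ℝ)
    (hp : ∀ i j, 0 ≤ p i j)
    (hsum : ∑ i : Fin (m + 1), ∑ j : Fin M, p i j = 1) :
    (∑ t ∈ Finset.univ.filter
        (fun t : Fin 7 → Fin (m + 1) × Fin M =>
          2 * ((t 0).1 : ℤ) + ((t 1).1 : ℤ) + ((t 2).1 : ℤ) - ((t 3).1 : ℤ)
            - ((t 4).1 : ℤ) - ((t 5).1 : ℤ) - ((t 6).1 : ℤ) = 0 ∧
          (M : ℤ) ∣ (2 * ((t 0).2 : ℤ) + ((t 1).2 : ℤ) + ((t 2).2 : ℤ)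
            - ((t 3).2 : ℤ) - ((t 4).2 : ℤ) - ((t 5).2 : ℤ) - ((t 6).2 : ℤ))),
        ∏ e : Fin 7, p (t e).1 (t e).2) =
    ∑ᶠ b ∈ {b : ℤ | (M : ℤ) ∣ b},
      (couplingPoly m M p 2 * couplingPoly m M p 1 ^ 2 *
        couplingPoly m M p (-1) ^ 4).coeff (0, b) :=
  cycle8_pattern_w3_activeness_probability_general m M p
end
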